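/- arXiv:2112.07540 — 8 statements merged into one kernel-verified Lean document; each statement's English description precedes it below -/
import Mathlib

section
/- Let 1 < p < q < 5, and let h_0, t_0 be the unique positive zeros of L and K' respectively, where L(s) = -\frac{2}{p+1} s^{(p-1)/2} + \frac{2}{q+1} s^{(q-1)/2} and K(s) = -\frac{5-p}{p+1} s^{(p-1)/2} + \frac{5-q}{q+1} s^{(q-1)/2}. Then h_0 < t_0 if and only if p + q > 6. -/
/-!
Since `β - α = (q - p)/2 > 0`, the map `s ↦ s ^ (β - α)` is strictly increasing on `[0, ∞)`, so
`h₀ < t₀` amounts to comparing the two given values of the powers. After cancelling the common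
factor `(q + 1)/(p + 1)` this is `(5 - q)(q - 1) < (5 - p)(p - 1)`, and the parabola
`s ↦ (5 - s)(s - 1)` is symmetric about `s = 3`: the difference is `(q - p)(p + q - 6)`.
-/

lemma lt_mul_div_mul_iff {a b c d : ℝ} (ha : 0 < a) (hb : 0 < b) (hd : 0 < d) :
    a / b < a * c / (b * d) ↔ d < c := by
  rw [mul_div_mul_comm, lt_mul_iff_one_lt_right (div_pos ha hb), one_lt_div hd]

lemma parabola_lt_iff_add_gt {p q : ℝ} (hpq : p < q) :
    (5 - q) * (q - 1) < (5 - p) * (p - 1) ↔ p + q > 6 := by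
  have hdiff : (5 - p) * (p - 1) - (5 - q) * (q - 1) = (q - p) * (p + q - 6) := by ring
  rw [← sub_pos, hdiff, mul_pos_iff_of_pos_left (sub_pos.2 hpq), sub_pos]

theorem stmt_2 (p q : ℝ) (hp : 1 < p) (hpq : p < q) (hq : q < 5)
    (h₀ t₀ : ℝ) (hh₀ : 0 < h₀) (ht₀ : 0 < t₀)
    (hh : h₀ ^ ((q-1)/2 - (p-1)/2) = (q+1)/(p+1))
    (ht : t₀ ^ ((q-1)/2 - (p-1)/2) =
      (5-p)*(q+1)*((p-1)/2) / ((p+1)*(5-q)*((q-1)/2))) :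
    h₀ < t₀ ↔ p + q > 6 := by
  have hexp : 0 < (q-1)/2 - (p-1)/2 := by linarith
  rw [← Real.rpow_lt_rpow_iff hh₀.le ht₀.le hexp, hh, ht, ← parabola_lt_iff_add_gt hpq]
  have hratio : (5-p)*(q+1)*((p-1)/2) / ((p+1)*(5-q)*((q-1)/2))
      = (q+1) * ((5-p)*(p-1)) / ((p+1) * ((5-q)*(q-1))) := by
    field_simp
  rw [hratio, lt_mul_div_mul_iff (by linarith) (by linarith) (by nlinarith)]
end

section
/- Let 1 < p < q < 5. Set α = (p-1)/2, β = (q-1)/2, c_2 = \frac{5-q}{q+1}, d_1 = -\frac{2}{p+1}, c_1 = -\frac{5-p}{p+1}, r_1 = c_1 + d_1(q-p). Let h_0 > 0 satisfy h_0^{β-α} = \frac{q+1}{p+1} and let t_1 > 0 satisfy t_1^{β-α} = -\frac{r_1 α}{c_2 β}. Then h_0 < t_1 if and only if q > -3p + 8. -/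
/-!
Since `β - α = (q - p)/2 > 0`, the map `x ↦ x ^ (β - α)` is strictly increasing on `[0, ∞)`, so
`h₀ < t₁` amounts to comparing the two prescribed powers. Their quotient is
`(p - 1)(5 + 2q - 3p) / ((5 - q)(q - 1))`, and numerator minus denominator factors as
`(q - p)(q + 3p - 8)`.
-/

lemma neg_r₁_mul_α_div_c₂_mul_β_eq {p q : ℝ} (hp : p + 1 ≠ 0) (hq : q + 1 ≠ 0)
    (hq₁ : q - 1 ≠ 0) (hq₅ : 5 - q ≠ 0) :
    -((-((5 - p) / (p + 1)) + -(2 / (p + 1)) * (q - p)) * ((p - 1) / 2)) /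
        ((5 - q) / (q + 1) * ((q - 1) / 2)) =
      (q + 1) / (p + 1) * ((p - 1) * (5 + 2 * q - 3 * p) / ((5 - q) * (q - 1))) := by
  field_simp
  ring

lemma one_lt_ratio_iff {p q : ℝ} (hpq : p < q) (hq₁ : 1 < q) (hq₅ : q < 5) :
    1 < (p - 1) * (5 + 2 * q - 3 * p) / ((5 - q) * (q - 1)) ↔ q > -3 * p + 8 := by
  have hden : 0 < (5 - q) * (q - 1) := mul_pos (by linarith) (by linarith)
  have hdiff : (p - 1) * (5 + 2 * q - 3 * p) - (5 - q) * (q - 1) = (q - p) * (q + 3 * p - 8) := by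
    ring
  rw [one_lt_div hden, ← sub_pos, hdiff, mul_pos_iff_of_pos_left (by linarith)]
  constructor <;> intro h <;> linarith

theorem stmt_3 (p q : ℝ) (hp : 1 < p) (hpq : p < q) (hq : q < 5)
    (α β c₁ c₂ d₁ r₁ : ℝ)
    (hα : α = (p-1)/2) (hβ : β = (q-1)/2)
    (hc₁ : c₁ = -((5-p)/(p+1))) (hc₂ : c₂ = (5-q)/(q+1))
    (hd₁ : d₁ = -(2/(p+1))) (hr₁ : r₁ = c₁ + d₁*(q-p))
    (h₀ t₁ : ℝ) (hh₀ : 0 < h₀) (ht₁ : 0 < t₁)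
    (hh : h₀ ^ (β - α) = (q+1)/(p+1))
    (ht : t₁ ^ (β - α) = -(r₁ * α) / (c₂ * β)) :
    h₀ < t₁ ↔ q > -3*p + 8 := by
  subst hα hβ hr₁ hc₁ hc₂ hd₁
  have hexp : 0 < (q - 1) / 2 - (p - 1) / 2 := by linarith
  have hh₀q : 0 < (q + 1) / (p + 1) := div_pos (by linarith) (by linarith)
  rw [← Real.rpow_lt_rpow_iff hh₀.le ht₁.le hexp, hh, ht,
    neg_r₁_mul_α_div_c₂_mul_β_eq (by linarith) (by linarith) (by linarith) (by linarith),
    lt_mul_iff_one_lt_right hh₀q]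
  exact one_lt_ratio_iff hpq (by linarith) hq
end

section
/- Let 1 < p < q < 5. Set α = (p-1)/2, β = (q-1)/2, c_1 = -\frac{5-p}{p+1}, c_2 = \frac{5-q}{q+1}, d_1 = -\frac{2}{p+1}, r_1 = c_1 + d_1(q-p). Let s_0 > 0 satisfy s_0^{β-α} = -c_1/c_2 and t_1 > 0 satisfy t_1^{β-α} = -r_1 α/(c_2 β). Then s_0 ≤ t_1 if and only if p ≥ 7/3. -/
/-
Raising to the positive power β - α is strictly monotone, so s₀ ≤ t₁ compares the two right-hand
sides. They are (q+1)/((p+1)(5-q)(q-1)) > 0 times (5-p)(q-1) and (5-3p+2q)(p-1) respectively,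
and the second factor minus the first is (q-p)(3p-7).
-/

lemma five_sub_mul_le_mul_iff_seven_div_three_le {p q : ℝ} (hpq : p < q) :
    (5 - p) * (q - 1) ≤ (5 - 3 * p + 2 * q) * (p - 1) ↔ 7 / 3 ≤ p := by
  have hdiff : (5 - 3 * p + 2 * q) * (p - 1) - (5 - p) * (q - 1) = (q - p) * (3 * p - 7) := by ring
  rw [← sub_nonneg, hdiff, mul_nonneg_iff_of_pos_left (sub_pos.mpr hpq)]
  constructor <;> intro h <;> linarith

theorem stmt_4 (p q : ℝ) (hp : 1 < p) (hpq : p < q) (hq : q < 5)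
    (α β c₁ c₂ d₁ r₁ : ℝ)
    (hα : α = (p-1)/2) (hβ : β = (q-1)/2)
    (hc₁ : c₁ = -((5-p)/(p+1))) (hc₂ : c₂ = (5-q)/(q+1))
    (hd₁ : d₁ = -(2/(p+1))) (hr₁ : r₁ = c₁ + d₁*(q-p))
    (s₀ t₁ : ℝ) (hs₀ : 0 < s₀) (ht₁ : 0 < t₁)
    (hs : s₀ ^ (β - α) = -c₁ / c₂)
    (ht : t₁ ^ (β - α) = -(r₁ * α) / (c₂ * β)) :
    s₀ ≤ t₁ ↔ p ≥ 7/3 := by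
  subst hα hβ hr₁ hc₁ hc₂ hd₁
  have hexp : 0 < (q - 1) / 2 - (p - 1) / 2 := by linarith
  rw [← Real.rpow_le_rpow_iff hs₀.le ht₁.le hexp, hs, ht]
  have hp1 : p + 1 ≠ 0 := by linarith
  have hq1 : q + 1 ≠ 0 := by linarith
  have h5q : 5 - q ≠ 0 := by linarith
  have hq1' : q - 1 ≠ 0 := by linarith
  set K := (q + 1) / ((p + 1) * (5 - q) * (q - 1)) with hK
  have hKpos : 0 < K :=
    div_pos (by linarith) (mul_pos (mul_pos (by linarith) (by linarith)) (by linarith))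
  have hs' : -(-((5 - p) / (p + 1))) / ((5 - q) / (q + 1)) = K * ((5 - p) * (q - 1)) := by
    rw [hK]; field_simp
  have ht' : -((-((5 - p) / (p + 1)) + -(2 / (p + 1)) * (q - p)) * ((p - 1) / 2)) /
      ((5 - q) / (q + 1) * ((q - 1) / 2)) = K * ((5 - 3 * p + 2 * q) * (p - 1)) := by
    rw [hK]; field_simp; ring
  rw [hs', ht', mul_le_mul_iff_right₀ hKpos, five_sub_mul_le_mul_iff_seven_div_three_le hpq, ge_iff_le]
end

section
/- Let 1 < p < q < 5. Set α = (p-1)/2, β = (q-1)/2, c_1 = -\frac{5-p}{p+1}, c_2 = \frac{5-q}{q+1}, d_1 = -\frac{2}{p+1}, r_2 = c_1 + 2 d_1(q-p). Let s_0 > 0 satisfy s_0^{β-α} = -c_1/c_2 and t_2 > 0 satisfy t_2^{β-α} = -r_2 α/(c_2 β). Then s_0 ≤ t_2 if and only if p ≥ 9/5. -/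
/-! Since `β - α > 0`, `s₀ ≤ t₂` iff `-c₁ / c₂ ≤ -(r₂ α) / (c₂ β)`, and the difference of these two
quantities factors as a positive multiple of `(q - p)(5p - 9)`. -/

theorem threshold_sub_threshold_eq {p q α β c₁ c₂ d₁ r₂ : ℝ}
    (hp : 1 < p) (hpq : p < q) (hq : q < 5)
    (hα : α = (p-1)/2) (hβ : β = (q-1)/2)
    (hc₁ : c₁ = -((5-p)/(p+1))) (hc₂ : c₂ = (5-q)/(q+1))
    (hd₁ : d₁ = -(2/(p+1))) (hr₂ : r₂ = c₁ + 2*d₁*(q-p)) :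
    -(r₂ * α) / (c₂ * β) - -c₁ / c₂
      = (q + 1) * (q - p) / ((p + 1) * (5 - q) * (q - 1)) * (5 * p - 9) := by
  have hp1 : p + 1 ≠ 0 := by linarith
  have hq1 : q + 1 ≠ 0 := by linarith
  have hq5 : 5 - q ≠ 0 := by linarith
  have hq1' : q - 1 ≠ 0 := by linarith
  subst hα hβ hc₁ hc₂ hd₁ hr₂
  field_simp
  ring

theorem stmt_5 (p q : ℝ) (hp : 1 < p) (hpq : p < q) (hq : q < 5)
    (α β c₁ c₂ d₁ r₂ : ℝ)
    (hα : α = (p-1)/2) (hβ : β = (q-1)/2)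
    (hc₁ : c₁ = -((5-p)/(p+1))) (hc₂ : c₂ = (5-q)/(q+1))
    (hd₁ : d₁ = -(2/(p+1))) (hr₂ : r₂ = c₁ + 2*d₁*(q-p))
    (s₀ t₂ : ℝ) (hs₀ : 0 < s₀) (ht₂ : 0 < t₂)
    (hs : s₀ ^ (β - α) = -c₁ / c₂)
    (ht : t₂ ^ (β - α) = -(r₂ * α) / (c₂ * β)) :
    s₀ ≤ t₂ ↔ p ≥ 9/5 := by
  have hβα : 0 < β - α := by rw [hα, hβ]; linarith
  have hfactor : 0 < (q + 1) * (q - p) / ((p + 1) * (5 - q) * (q - 1)) := by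
    have : 0 < q - p := by linarith
    have : 0 < 5 - q := by linarith
    have : 0 < q - 1 := by linarith
    have : 0 < p + 1 := by linarith
    have : 0 < q + 1 := by linarith
    positivity
  calc s₀ ≤ t₂ ↔ s₀ ^ (β - α) ≤ t₂ ^ (β - α) := (Real.rpow_le_rpow_iff hs₀.le ht₂.le hβα).symm
    _ ↔ 0 ≤ (q + 1) * (q - p) / ((p + 1) * (5 - q) * (q - 1)) * (5 * p - 9) := by
      rw [hs, ht, ← sub_nonneg,
        threshold_sub_threshold_eq hp hpq hq hα hβ hc₁ hc₂ hd₁ hr₂]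
    _ ↔ 0 ≤ 5 * p - 9 := mul_nonneg_iff_of_pos_left hfactor
    _ ↔ p ≥ 9/5 := by constructor <;> intro <;> linarith
end

section
/- Let 0 < α < β < 2 with α ≥ 2/3. Then the improper integral ∫_0^1 \frac{-(2-α)(1-s^α) + (2-β)(1-s^β)}{(s^α - s^β)^{3/2}} ds diverges to -∞. -/
/-!
Near `s = 0` the numerator tends to `α - β < 0` while, as `α ≥ 2/3`, the denominator is at most
`(s ^ α) ^ (3/2) ≤ s`, so the integrand is bounded above by `(α - β) / (2 s)`, whose integral
diverges logarithmically. Near `s = 1` both numerator and `s ^ α - s ^ β` vanish to first order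
in `1 - s`, so the integrand is `O((1 - s) ^ (-1/2))` and contributes a finite amount.
-/

open MeasureTheory Filter Set Topology

theorem tendsto_setIntegral_Ioo_atBot_of_eventually_le_div {f : ℝ → ℝ} {b K : ℝ} (hb : 0 < b)
    (hK : K < 0) (hint : ∀ a ∈ Ioo 0 b, IntegrableOn f (Ioc a b))
    (hle : ∀ᶠ s in 𝓝[>] 0, f s ≤ K / s) :
    Tendsto (fun a => ∫ s in Ioo a b, f s) (𝓝[>] 0) atBot := by
  obtain ⟨ε, hε, hεle⟩ := (nhdsGT_basis (0:ℝ)).eventually_iff.1 hle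
  obtain ⟨c, hc, hcεb⟩ := exists_between (lt_min hε hb)
  obtain ⟨hcε, hcb⟩ := lt_min_iff.1 hcεb
  set B := ∫ s in c..b, f s
  have hbound : ∀ a ∈ Ioo 0 c, ∫ s in Ioo a b, f s ≤ K * (Real.log c - Real.log a) + B := by
    rintro a ⟨ha, hac⟩
    have hfab : IntervalIntegrable f volume a b :=
      (intervalIntegrable_iff_integrableOn_Ioc_of_le (hac.trans hcb).le).2
        (hint a ⟨ha, hac.trans hcb⟩)
    have hfac : IntervalIntegrable f volume a c := hfab.mono_set (by
      rw [uIcc_of_le (hac.trans hcb).le, uIcc_of_le hac.le]; exact Icc_subset_Icc_right hcb.le)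
    have hfcb : IntervalIntegrable f volume c b := hfab.mono_set (by
      rw [uIcc_of_le (hac.trans hcb).le, uIcc_of_le hcb.le]; exact Icc_subset_Icc_left hac.le)
    have hinv : IntervalIntegrable (fun s => K / s) volume a c :=
      (continuousOn_const.div continuousOn_id fun s hs => by
        rw [uIcc_of_le hac.le] at hs; exact (ha.trans_le hs.1).ne').intervalIntegrable
    have hleft : ∫ s in a..c, f s ≤ K * (Real.log c - Real.log a) := calc
      ∫ s in a..c, f s ≤ ∫ s in a..c, K / s :=
        intervalIntegral.integral_mono_on hac.le hfac hinv fun s hs =>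
          hεle ⟨ha.trans_le hs.1, hs.2.trans_lt hcε⟩
      _ = K * (Real.log c - Real.log a) := by
        simp only [div_eq_mul_inv, intervalIntegral.integral_const_mul]
        rw [integral_inv_of_pos ha hc, Real.log_div hc.ne' ha.ne']
    rw [← integral_Ioc_eq_integral_Ioo, ← intervalIntegral.integral_of_le (hac.trans hcb).le,
      ← intervalIntegral.integral_add_adjacent_intervals hfac hfcb]
    linarith
  have hlog : Tendsto (fun a => K * (Real.log c - Real.log a) + B) (𝓝[>] 0) atBot := by
    have := tendsto_atBot_add_const_right _ (K * Real.log c + B)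
      (Real.tendsto_log_nhdsGT_zero.const_mul_atBot (neg_pos.2 hK))
    exact this.congr fun a => by ring
  refine tendsto_atBot_mono' _ ?_ hlog
  filter_upwards [Ioo_mem_nhdsGT hc] with a ha using hbound a ha

theorem one_sub_rpow_le_two_mul_one_sub {s γ : ℝ} (hs0 : 0 < s) (hs1 : s ≤ 1) (hγ : γ ≤ 2) :
    1 - s ^ γ ≤ 2 * (1 - s) := by
  have h2 : s ^ (2:ℝ) ≤ s ^ γ := Real.rpow_le_rpow_of_exponent_ge hs0 hs1 hγ
  rw [Real.rpow_two] at h2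
  nlinarith

theorem mul_rpow_mul_one_sub_le_one_sub_rpow {s γ : ℝ} (hs0 : 0 < s) (hγ : 0 ≤ γ) :
    γ * s ^ γ * (1 - s) ≤ 1 - s ^ γ := by
  have ht : 0 < s ^ γ := Real.rpow_pos_of_pos hs0 γ
  have hlog : 1 - (s ^ γ)⁻¹ ≤ γ * (s - 1) := calc
    1 - (s ^ γ)⁻¹ ≤ Real.log (s ^ γ) := Real.one_sub_inv_le_log_of_pos ht
    _ = γ * Real.log s := Real.log_rpow hs0 γ
    _ ≤ γ * (s - 1) := mul_le_mul_of_nonneg_left (Real.log_le_sub_one_of_pos hs0) hγ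
  have := mul_le_mul_of_nonneg_left hlog ht.le
  rw [mul_sub, mul_inv_cancel₀ ht.ne'] at this
  linarith

theorem mul_rpow_mul_one_sub_le_rpow_sub_rpow {s α β : ℝ} (hs0 : 0 < s) (hαβ : α ≤ β) :
    (β - α) * s ^ β * (1 - s) ≤ s ^ α - s ^ β := by
  have key := mul_le_mul_of_nonneg_left
    (mul_rpow_mul_one_sub_le_one_sub_rpow hs0 (sub_nonneg.2 hαβ)) (Real.rpow_nonneg hs0.le α)
  have hsplit : s ^ β = s ^ α * s ^ (β - α) := by rw [← Real.rpow_add hs0]; ring_nf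
  rw [hsplit]
  linarith

theorem rpow_sub_rpow_rpow_three_halves_le_self {s α β : ℝ} (hs0 : 0 < s) (hs1 : s ≤ 1)
    (hα : 2/3 ≤ α) (hαβ : α ≤ β) : (s ^ α - s ^ β) ^ ((3:ℝ)/2) ≤ s := calc
  (s ^ α - s ^ β) ^ ((3:ℝ)/2) ≤ (s ^ ((2:ℝ)/3)) ^ ((3:ℝ)/2) := by
    refine Real.rpow_le_rpow ?_ ?_ (by norm_num)
    · exact sub_nonneg.2 (Real.rpow_le_rpow_of_exponent_ge hs0 hs1 hαβ)
    · linarith [Real.rpow_nonneg hs0.le β, Real.rpow_le_rpow_of_exponent_ge hs0 hs1 hα]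
  _ = s := by rw [← Real.rpow_mul hs0.le]; norm_num

noncomputable def powDiffIntegrand (α β s : ℝ) : ℝ :=
  (-(2-α)*(1 - s ^ α) + (2-β)*(1 - s ^ β)) / (s ^ α - s ^ β) ^ ((3:ℝ)/2)

variable {α β : ℝ}

theorem continuousOn_powDiffIntegrand (hαβ : α < β) :
    ContinuousOn (powDiffIntegrand α β) (Ioo 0 1) := by
  have hden : ∀ s ∈ Ioo (0:ℝ) 1, 0 < s ^ α - s ^ β := fun s hs =>
    sub_pos.2 (Real.rpow_lt_rpow_of_exponent_gt hs.1 hs.2 hαβ)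
  have hpow : ∀ γ : ℝ, ContinuousOn (fun s : ℝ => s ^ γ) (Ioo 0 1) := fun γ =>
    continuousOn_id.rpow_const fun s hs => Or.inl hs.1.ne'
  refine ContinuousOn.div (by fun_prop) (((hpow α).sub (hpow β)).rpow_const
    fun s hs => Or.inl (hden s hs).ne') fun s hs => (Real.rpow_pos_of_pos (hden s hs) _).ne'

theorem powDiffIntegrand_le_div_self (hα : 2/3 ≤ α) (hαβ : α < β) (hβ : β ≤ 2) {s : ℝ}
    (hs0 : 0 < s) (hs1 : s < 1) (hsα : s ^ α ≤ (β - α) / 4) :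
    powDiffIntegrand α β s ≤ (α - β) / 2 / s := by
  have hnum : -(2-α)*(1 - s ^ α) + (2-β)*(1 - s ^ β) ≤ (α - β) / 2 := by
    nlinarith [Real.rpow_nonneg hs0.le α, Real.rpow_nonneg hs0.le β]
  have hden : 0 < (s ^ α - s ^ β) ^ ((3:ℝ)/2) :=
    Real.rpow_pos_of_pos (sub_pos.2 (Real.rpow_lt_rpow_of_exponent_gt hs0 hs1 hαβ)) _
  calc powDiffIntegrand α β s
      ≤ (-(2-α)*(1 - s ^ α) + (2-β)*(1 - s ^ β)) / s :=
        (div_le_div_iff₀ hden hs0).2 (mul_le_mul_of_nonpos_left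
          (rpow_sub_rpow_rpow_three_halves_le_self hs0 hs1.le hα hαβ.le) (by linarith))
    _ ≤ (α - β) / 2 / s := div_le_div_of_nonneg_right hnum hs0.le

theorem eventually_powDiffIntegrand_le_div_self (hα : 2/3 ≤ α) (hαβ : α < β) (hβ : β ≤ 2) :
    ∀ᶠ s in 𝓝[>] 0, powDiffIntegrand α β s ≤ (α - β) / 2 / s := by
  have hα0 : 0 < α := by linarith
  have hpow : Tendsto (fun s : ℝ => s ^ α) (𝓝[>] 0) (𝓝 0) := by
    simpa [Real.zero_rpow hα0.ne'] using
      (Real.continuousAt_rpow_const 0 α (Or.inr hα0.le)).tendsto.mono_left nhdsWithin_le_nhds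
  filter_upwards [hpow.eventually (gt_mem_nhds (by linarith : (0:ℝ) < (β - α) / 4)),
    Ioo_mem_nhdsGT one_pos] with s hsα hs
  exact powDiffIntegrand_le_div_self hα hαβ hβ hs.1 hs.2 hsα.le

theorem abs_powDiffIntegrand_le (hα : 0 ≤ α) (hαβ : α < β) (hβ : β ≤ 2) {a s : ℝ} (ha : 0 < a)
    (has : a ≤ s) (hs1 : s < 1) :
    |powDiffIntegrand α β s| ≤ 8 / ((β - α) * a ^ β) ^ ((3:ℝ)/2) * (1 - s) ^ (-(1:ℝ)/2) := by
  have hs0 : 0 < s := ha.trans_le has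
  have h1s : 0 < 1 - s := sub_pos.2 hs1
  have hβα : 0 < β - α := sub_pos.2 hαβ
  have haβ : 0 < a ^ β := Real.rpow_pos_of_pos ha β
  have hnum : |-(2-α)*(1 - s ^ α) + (2-β)*(1 - s ^ β)| ≤ 8 * (1 - s) := by
    have hα1 := Real.rpow_le_one hs0.le hs1.le hα
    have hβ1 := Real.rpow_le_one hs0.le hs1.le (hα.trans hαβ.le)
    have hα2 := one_sub_rpow_le_two_mul_one_sub hs0 hs1.le (hαβ.le.trans hβ)
    have hβ2 := one_sub_rpow_le_two_mul_one_sub hs0 hs1.le hβ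
    rw [abs_le]; constructor <;> nlinarith
  have hden : ((β - α) * a ^ β) ^ ((3:ℝ)/2) * (1 - s) ^ ((3:ℝ)/2) ≤
      (s ^ α - s ^ β) ^ ((3:ℝ)/2) := by
    rw [← Real.mul_rpow (by positivity) h1s.le]
    refine Real.rpow_le_rpow (by positivity) ?_ (by norm_num)
    calc (β - α) * a ^ β * (1 - s) ≤ (β - α) * s ^ β * (1 - s) := by
          gcongr
          linarith
      _ ≤ s ^ α - s ^ β := mul_rpow_mul_one_sub_le_rpow_sub_rpow hs0 hαβ.le
  have hsqrt : (1 - s) / (1 - s) ^ ((3:ℝ)/2) = (1 - s) ^ (-(1:ℝ)/2) := by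
    rw [← Real.rpow_one_sub' h1s.le (by norm_num)]; norm_num
  calc |powDiffIntegrand α β s|
      = |-(2-α)*(1 - s ^ α) + (2-β)*(1 - s ^ β)| / (s ^ α - s ^ β) ^ ((3:ℝ)/2) := by
        rw [powDiffIntegrand, abs_div, abs_of_nonneg (Real.rpow_nonneg (by
          linarith [Real.rpow_le_rpow_of_exponent_ge hs0 hs1.le hαβ.le]) _)]
    _ ≤ 8 * (1 - s) / (((β - α) * a ^ β) ^ ((3:ℝ)/2) * (1 - s) ^ ((3:ℝ)/2)) :=
        div_le_div₀ (by positivity) hnum (by positivity) hden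
    _ = 8 / ((β - α) * a ^ β) ^ ((3:ℝ)/2) * (1 - s) ^ (-(1:ℝ)/2) := by
        rw [← hsqrt]; field_simp

theorem integrableOn_powDiffIntegrand (hα : 0 ≤ α) (hαβ : α < β) (hβ : β ≤ 2) {a : ℝ}
    (ha : 0 < a) : IntegrableOn (powDiffIntegrand α β) (Ioc a 1) := by
  rw [integrableOn_Ioc_iff_integrableOn_Ioo]
  have hdom : IntegrableOn
      (fun s => 8 / ((β - α) * a ^ β) ^ ((3:ℝ)/2) * (1 - s) ^ (-(1:ℝ)/2)) (Ioo a 1) := by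
    have := ((intervalIntegral.intervalIntegrable_rpow' (a := 0) (b := 1 - a)
      (by norm_num : -1 < -(1:ℝ)/2)).comp_sub_left 1).const_mul (8 / ((β - α) * a ^ β) ^ ((3:ℝ)/2))
    simp only [sub_sub_cancel, sub_zero] at this
    exact this.2.mono_set Ioo_subset_Ioc_self
  refine hdom.mono' (((continuousOn_powDiffIntegrand hαβ).mono
    (Ioo_subset_Ioo_left ha.le)).aestronglyMeasurable measurableSet_Ioo) ?_
  filter_upwards [ae_restrict_mem measurableSet_Ioo] with s hs
  exact abs_powDiffIntegrand_le hα hαβ hβ ha hs.1.le hs.2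

theorem stmt_7 (α β : ℝ) (hα : 0 < α) (hαβ : α < β) (hβ : β < 2) (hα' : 2/3 ≤ α) :
    Tendsto
      (fun a : ℝ => ∫ s in Set.Ioo a 1,
        (-(2-α)*(1 - s ^ α) + (2-β)*(1 - s ^ β)) / (s ^ α - s ^ β) ^ ((3:ℝ)/2))
      (nhdsWithin 0 (Set.Ioi 0)) atBot :=
  tendsto_setIntegral_Ioo_atBot_of_eventually_le_div one_pos (by linarith)
    (fun _ ha => integrableOn_powDiffIntegrand hα.le hαβ hβ.le ha.1)
    (eventually_powDiffIntegrand_le_div_self hα' hαβ hβ.le)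
end

section
/- Let a, b, c be real numbers with c > 0, c not a nonpositive integer, and c > a + b. Then the hypergeometric series F(a,b,c;1) = \sum_{n=0}^{∞} \frac{(a)_n (b)_n}{(c)_n n!} converges absolutely, and the identity (a + b - c) F(a,b,c;1) + (c - a) F(a-1,b,c;1) = 0 holds. -/
/-!
The contiguous relation telescopes: with `t`, `s` the terms of `F(a,b,c;1)` and
`F(a-1,b,c;1)` and `w n = b (a)_n (b+1)_n / ((c)_n n!)`, one has
`(a+b-c) t n + (c-a) s n = w n - w (n-1)`, so the partial sums of the left side are `w n`.
All three sequences satisfy `g (n+1) (c+n) (n+1) = g n (u+n) (v+n)`, and Raabe's test makes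
`n ^ p |g n|` eventually nonincreasing for every `p < c + 1 - u - v`. Hence `t`, `s` are
`O(n^(-p))` with `p > 1`, and `w n → 0` since `c + 1 - a - (b+1) > 0`.
-/

open Filter Polynomial Topology Asymptotics

theorem isBigO_rpow_neg_of_eventually_rpow_mul_abs_succ_le {g : ℕ → ℝ} {p : ℝ}
    (h : ∀ᶠ n : ℕ in atTop, ((n + 1 : ℕ) : ℝ) ^ p * |g (n + 1)| ≤ (n : ℝ) ^ p * |g n|) :
    g =O[atTop] fun n => (n : ℝ) ^ (-p) := by
  obtain ⟨N, hN⟩ := eventually_atTop.mp h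
  have hmono : ∀ n ≥ N, (n : ℝ) ^ p * |g n| ≤ (N : ℝ) ^ p * |g N| := by
    intro n hn
    induction n, hn using Nat.le_induction with
    | base => exact le_rfl
    | succ n hn ih => exact (hN n hn).trans ih
  refine IsBigO.of_bound ((N : ℝ) ^ p * |g N|) ?_
  filter_upwards [eventually_ge_atTop N, eventually_gt_atTop 0] with n hn hn0
  have hpos : (0 : ℝ) < n := Nat.cast_pos.mpr hn0
  rw [Real.norm_eq_abs, Real.norm_of_nonneg (by positivity), Real.rpow_neg hpos.le,
    ← div_eq_mul_inv, le_div_iff₀ (by positivity), mul_comm]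
  exact hmono n hn

theorem tendsto_natCast_mul_one_add_inv_rpow_sub_one (p : ℝ) :
    Tendsto (fun n : ℕ => (n : ℝ) * ((1 + (n : ℝ)⁻¹) ^ p - 1)) atTop (𝓝 p) := by
  have hderiv : HasDerivAt (fun x : ℝ => (1 + x) ^ p) p 0 := by
    simpa using ((hasDerivAt_id (0 : ℝ)).const_add 1).rpow_const (p := p) (by norm_num)
  have hinv : Tendsto (fun n : ℕ => (n : ℝ)⁻¹) atTop (𝓝[≠] 0) :=
    tendsto_nhdsWithin_iff.mpr ⟨tendsto_inv_atTop_nhds_zero_nat,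
      by filter_upwards [eventually_gt_atTop 0] with n hn; simpa using hn.ne'⟩
  refine ((hasDerivAt_iff_tendsto_slope.mp hderiv).comp hinv).congr' ?_
  filter_upwards [eventually_gt_atTop 0] with n hn
  simp [slope_def_field, mul_comm]

theorem tendsto_natCast_mul_ratio_sub_one (u v c : ℝ) :
    Tendsto (fun n : ℕ => (n : ℝ) * ((c + n) * (n + 1) / ((u + n) * (v + n)) - 1))
      atTop (𝓝 (c + 1 - u - v)) := by
  have hcont : ContinuousAt
      (fun x : ℝ => ((c + 1 - u - v) + (c - u * v) * x) / ((u * x + 1) * (v * x + 1))) 0 :=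
    ContinuousAt.div (by fun_prop) (by fun_prop) (by norm_num)
  have hlim := hcont.tendsto.comp tendsto_inv_atTop_nhds_zero_nat
  simp only [Function.comp_def, mul_zero, add_zero, zero_add, mul_one, div_one] at hlim
  refine hlim.congr' ?_
  filter_upwards [eventually_gt_atTop 0,
    tendsto_natCast_atTop_atTop.eventually_gt_atTop (-u),
    tendsto_natCast_atTop_atTop.eventually_gt_atTop (-v)] with n hn hu hv
  have : (0 : ℝ) < n := Nat.cast_pos.mpr hn
  have : u + n ≠ 0 := by linarith
  have : v + n ≠ 0 := by linarith
  field_simp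
  ring

section Recurrence

variable {g : ℕ → ℝ} {u v c : ℝ}

theorem isBigO_rpow_neg_of_succ_mul_eq {p : ℝ} (hp : p + u + v < c + 1)
    (hg : ∀ n : ℕ, g (n + 1) * ((c + n) * (n + 1)) = g n * ((u + n) * (v + n))) :
    g =O[atTop] fun n => (n : ℝ) ^ (-p) := by
  apply isBigO_rpow_neg_of_eventually_rpow_mul_abs_succ_le
  have hraabe := (tendsto_natCast_mul_ratio_sub_one u v c).sub
    (tendsto_natCast_mul_one_add_inv_rpow_sub_one p)
  filter_upwards [hraabe.eventually (lt_mem_nhds (by linarith : 0 < c + 1 - u - v - p)),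
    eventually_gt_atTop 0, tendsto_natCast_atTop_atTop.eventually_gt_atTop (-u),
    tendsto_natCast_atTop_atTop.eventually_gt_atTop (-v),
    tendsto_natCast_atTop_atTop.eventually_gt_atTop (-c)] with n hratio hn hu hv hc
  have hn : (0 : ℝ) < n := Nat.cast_pos.mpr hn
  have hden : 0 < (c + n) * (n + 1) := by nlinarith
  have hnum : 0 < (u + n) * (v + n) := by nlinarith
  set q := (1 + (n : ℝ)⁻¹) ^ p
  have hq : q * ((u + n) * (v + n)) ≤ (c + n) * (n + 1) := by
    rw [← le_div_iff₀ hnum]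
    nlinarith
  have hsucc : ((n + 1 : ℕ) : ℝ) ^ p = (n : ℝ) ^ p * q := by
    rw [← Real.mul_rpow hn.le (by positivity)]
    congr 1
    field_simp
    push_cast
    ring
  have habs : |g (n + 1)| * ((c + n) * (n + 1)) = |g n| * ((u + n) * (v + n)) := by
    rw [← abs_of_pos hden, ← abs_of_pos hnum, ← abs_mul, ← abs_mul, hg]
  refine le_of_mul_le_mul_right ?_ hden
  calc ((n + 1 : ℕ) : ℝ) ^ p * |g (n + 1)| * ((c + n) * (n + 1))
      = (n : ℝ) ^ p * |g n| * (q * ((u + n) * (v + n))) := by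
        rw [hsucc, mul_assoc, habs]; ring
    _ ≤ (n : ℝ) ^ p * |g n| * ((c + n) * (n + 1)) := by gcongr

theorem summable_abs_of_succ_mul_eq (huvc : u + v < c)
    (hg : ∀ n : ℕ, g (n + 1) * ((c + n) * (n + 1)) = g n * ((u + n) * (v + n))) :
    Summable fun n => |g n| := by
  have hO := isBigO_rpow_neg_of_succ_mul_eq (p := 1 + (c - u - v) / 2) (by linarith) hg
  exact summable_of_isBigO_nat' (Real.summable_nat_rpow.mpr (by linarith)) hO.norm_left

theorem tendsto_zero_of_succ_mul_eq (huvc : u + v < c + 1)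
    (hg : ∀ n : ℕ, g (n + 1) * ((c + n) * (n + 1)) = g n * ((u + n) * (v + n))) :
    Tendsto g atTop (𝓝 0) := by
  have hp : 0 < (c + 1 - u - v) / 2 := by linarith
  exact (isBigO_rpow_neg_of_succ_mul_eq (by linarith) hg).trans_tendsto
    ((tendsto_rpow_neg_atTop hp).comp tendsto_natCast_atTop_atTop)

end Recurrence

theorem ascPochhammer_succ_eval_left {R : Type*} [CommSemiring R] (n : ℕ) (x : R) :
    (ascPochhammer R (n + 1)).eval x = x * (ascPochhammer R n).eval (x + 1) := by
  simp [ascPochhammer_succ_left, eval_comp]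

theorem ascPochhammer_eval_ne_zero {R : Type*} [CommRing R] [IsDomain R] [CharZero R] {x : R}
    (hx : ∀ k : ℕ, x ≠ -k) (n : ℕ) : (ascPochhammer R n).eval x ≠ 0 := by
  rw [Ne, ascPochhammer_eval_eq_zero_iff]
  rintro ⟨k, -, hk⟩
  exact hx k (by rw [hk, neg_neg])

noncomputable def hypergeometricTerm (a b c : ℝ) (n : ℕ) : ℝ :=
  (ascPochhammer ℝ n).eval a * (ascPochhammer ℝ n).eval b /
    ((ascPochhammer ℝ n).eval c * n.factorial)

section Hypergeometric

variable {a b c : ℝ}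

theorem hypergeometricTerm_succ_mul (hc : ∀ k : ℕ, c ≠ -k) (n : ℕ) :
    hypergeometricTerm a b c (n + 1) * ((c + n) * (n + 1)) =
      hypergeometricTerm a b c n * ((a + n) * (b + n)) := by
  have h₁ := ascPochhammer_eval_ne_zero hc n
  have h₂ : c + n ≠ 0 := fun h => hc n (eq_neg_of_add_eq_zero_left h)
  simp only [hypergeometricTerm, ascPochhammer_succ_eval, Nat.factorial_succ, Nat.cast_mul,
    Nat.cast_succ]
  field_simp

theorem summable_abs_hypergeometricTerm (hc : ∀ k : ℕ, c ≠ -k) (habc : a + b < c) :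
    Summable fun n => |hypergeometricTerm a b c n| :=
  summable_abs_of_succ_mul_eq habc (hypergeometricTerm_succ_mul hc)

theorem sum_range_succ_hypergeometricTerm_contiguous (hc : ∀ k : ℕ, c ≠ -k) (n : ℕ) :
    ∑ k ∈ Finset.range (n + 1),
        ((a + b - c) * hypergeometricTerm a b c k + (c - a) * hypergeometricTerm (a - 1) b c k) =
      b * hypergeometricTerm a (b + 1) c n := by
  induction n with
  | zero => simp [hypergeometricTerm]
  | succ n ih =>
    rw [Finset.sum_range_succ, ih]
    have h₁ := ascPochhammer_eval_ne_zero hc n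
    have h₂ : c + n ≠ 0 := fun h => hc n (eq_neg_of_add_eq_zero_left h)
    simp only [hypergeometricTerm, ascPochhammer_succ_eval_left (x := a - 1),
      ascPochhammer_succ_eval_left (x := b), sub_add_cancel]
    simp only [ascPochhammer_succ_eval, Nat.factorial_succ, Nat.cast_mul, Nat.cast_succ]
    field_simp
    ring

theorem hypergeometric_contiguous_tsum (hc : ∀ k : ℕ, c ≠ -k) (habc : a + b < c) :
    (a + b - c) * ∑' n, hypergeometricTerm a b c n +
      (c - a) * ∑' n, hypergeometricTerm (a - 1) b c n = 0 := by
  have ht := (summable_abs_hypergeometricTerm hc habc).of_abs.mul_left (a + b - c)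
  have hs := (summable_abs_hypergeometricTerm (a := a - 1) (b := b) hc
    (by linarith)).of_abs.mul_left (c - a)
  have hpartial := ((ht.add hs).hasSum.tendsto_sum_nat.comp (tendsto_add_atTop_nat 1)).congr
    (sum_range_succ_hypergeometricTerm_contiguous hc)
  have hzero : Tendsto (fun n => b * hypergeometricTerm a (b + 1) c n) atTop (𝓝 0) := by
    simpa using
      (tendsto_zero_of_succ_mul_eq (by linarith) (hypergeometricTerm_succ_mul hc)).const_mul b
  rw [← tsum_mul_left, ← tsum_mul_left, ← ht.tsum_add hs]
  exact tendsto_nhds_unique hpartial hzero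

end Hypergeometric

theorem stmt_9_general (a b c : ℝ) (hc' : ∀ n : ℕ, c ≠ -(n : ℝ))
    (hcab : a + b < c) :
    Summable (fun n : ℕ =>
      |(ascPochhammer ℝ n).eval a * (ascPochhammer ℝ n).eval b /
        ((ascPochhammer ℝ n).eval c * n.factorial)|) ∧
    Summable (fun n : ℕ =>
      |(ascPochhammer ℝ n).eval (a-1) * (ascPochhammer ℝ n).eval b /
        ((ascPochhammer ℝ n).eval c * n.factorial)|) ∧
    (a + b - c) * (∑' n : ℕ, (ascPochhammer ℝ n).eval a * (ascPochhammer ℝ n).eval b /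
        ((ascPochhammer ℝ n).eval c * n.factorial))
      + (c - a) * (∑' n : ℕ, (ascPochhammer ℝ n).eval (a-1) * (ascPochhammer ℝ n).eval b /
        ((ascPochhammer ℝ n).eval c * n.factorial)) = 0 := by
  exact ⟨summable_abs_hypergeometricTerm hc' hcab,
    summable_abs_hypergeometricTerm (a := a - 1) hc' (by linarith),
    hypergeometric_contiguous_tsum hc' hcab⟩

theorem stmt_9 (a b c : ℝ) (hc : 0 < c) (hc' : ∀ n : ℕ, c ≠ -(n : ℝ))
    (hcab : a + b < c) :
    Summable (fun n : ℕ =>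
      |(ascPochhammer ℝ n).eval a * (ascPochhammer ℝ n).eval b /
        ((ascPochhammer ℝ n).eval c * n.factorial)|) ∧
    Summable (fun n : ℕ =>
      |(ascPochhammer ℝ n).eval (a-1) * (ascPochhammer ℝ n).eval b /
        ((ascPochhammer ℝ n).eval c * n.factorial)|) ∧
    (a + b - c) * (∑' n : ℕ, (ascPochhammer ℝ n).eval a * (ascPochhammer ℝ n).eval b /
        ((ascPochhammer ℝ n).eval c * n.factorial))
      + (c - a) * (∑' n : ℕ, (ascPochhammer ℝ n).eval (a-1) * (ascPochhammer ℝ n).eval b /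
        ((ascPochhammer ℝ n).eval c * n.factorial)) = 0 :=
  stmt_9_general a b c hc' hcab
end

section
/- Let 1 < p < q < 5 with p < 7/3. Define α = (p-1)/2, β = (q-1)/2 and H(α,β) = ∫_0^1 \frac{-(2-α)(1-s^α) + (2-β)(1-s^β)}{(s^α - s^β)^{3/2}} ds. Then: H(α,β) < 0 if 2p + q > 7; H(α,β) = 0 if 2p + q = 7; and H(α,β) > 0 if 2p + q < 7. -/
/-!
Write `D(s) = s^α - s^β`. The function `F(x) = 2 (x - x^(1-α)) D(x)^(-1/2)` satisfies
`F' = h - (2 - 2α - β) s^(-α) D^(-1/2)`, where `h` is the integrand of `H`, and `F` tends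
to `0` at both ends of `(0, 1)`. Hence `H = (2 - 2α - β) J` with
`J = ∫₀¹ s^(-α) D^(-1/2) ds > 0`, and `2 - 2α - β = (7 - 2p - q) / 2`.

Integrability and the boundary limits all come from the single Bernoulli-type bound
`D(s) ≥ min(β - α, 1) s^α (1 - s)`, which dominates every function involved by a Beta kernel
`s^r (1 - s)^t` with `r, t > -1`.
-/

open MeasureTheory Set Filter Topology

theorem min_mul_one_sub_le_one_sub_rpow {s d : ℝ} (hs0 : 0 ≤ s) (hs1 : s ≤ 1) (hd : 0 ≤ d) :
    min d 1 * (1 - s) ≤ 1 - s ^ d := by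
  have hmono : s ^ d ≤ s ^ min d 1 :=
    Real.rpow_le_rpow_of_exponent_ge' hs0 hs1 (le_min hd zero_le_one) (min_le_left d 1)
  have hbernoulli : (1 + (s - 1)) ^ min d 1 ≤ 1 + min d 1 * (s - 1) :=
    rpow_one_add_le_one_add_mul_self (by linarith) (le_min hd zero_le_one) (min_le_right d 1)
  rw [add_sub_cancel] at hbernoulli
  linarith

theorem one_sub_rpow_le_max_mul_one_sub {s d : ℝ} (hs0 : 0 ≤ s) (hs1 : s ≤ 1) (hd : 0 ≤ d) :
    1 - s ^ d ≤ max d 1 * (1 - s) := by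
  have hmono : s ^ max d 1 ≤ s ^ d :=
    Real.rpow_le_rpow_of_exponent_ge' hs0 hs1 hd (le_max_left d 1)
  have hbernoulli : 1 + max d 1 * (s - 1) ≤ (1 + (s - 1)) ^ max d 1 :=
    one_add_mul_self_le_rpow_one_add (by linarith) (le_max_right d 1)
  rw [add_sub_cancel] at hbernoulli
  linarith

theorem min_mul_rpow_mul_one_sub_le_rpow_sub_rpow {a b s : ℝ} (hab : a ≤ b) (hs0 : 0 < s)
    (hs1 : s ≤ 1) : min (b - a) 1 * s ^ a * (1 - s) ≤ s ^ a - s ^ b := by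
  have hfactor : s ^ a - s ^ b = s ^ a * (1 - s ^ (b - a)) := by
    rw [mul_sub, mul_one, ← Real.rpow_add hs0, add_sub_cancel]
  rw [hfactor, mul_comm _ (s ^ a), mul_assoc]
  exact mul_le_mul_of_nonneg_left
    (min_mul_one_sub_le_one_sub_rpow hs0.le hs1 (sub_nonneg.mpr hab)) (Real.rpow_nonneg hs0.le a)

theorem intervalIntegrable_rpow_mul_one_sub_rpow {r t : ℝ} (hr : -1 < r) (ht : -1 < t) :
    IntervalIntegrable (fun x : ℝ => x ^ r * (1 - x) ^ t) volume 0 1 := by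
  have hleft : IntervalIntegrable (fun x : ℝ => x ^ r * (1 - x) ^ t) volume 0 (1 / 2) := by
    refine (intervalIntegral.intervalIntegrable_rpow' hr).mul_continuousOn ?_
    refine fun x hx => ((continuousAt_const.sub continuousAt_id).rpow_const ?_).continuousWithinAt
    rw [uIcc_of_le (by norm_num)] at hx
    exact Or.inl (show (1 : ℝ) - x ≠ 0 by linarith [hx.2])
  have hright : IntervalIntegrable (fun x : ℝ => x ^ r * (1 - x) ^ t) volume (1 / 2) 1 := by
    have h : IntervalIntegrable (fun x : ℝ => (1 - x) ^ t) volume (1 / 2) 1 := by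
      convert ((intervalIntegral.intervalIntegrable_rpow' (a := 0) (b := 1 / 2) ht).comp_sub_left
        1).symm using 1 <;> norm_num
    refine h.continuousOn_mul ?_
    refine fun x hx => (continuousAt_id.rpow_const ?_).continuousWithinAt
    rw [uIcc_of_le (by norm_num)] at hx
    exact Or.inl (by dsimp; linarith [hx.1])
  exact hleft.trans hright

theorem intervalIntegrable_of_norm_le_rpow_mul_one_sub_rpow {f : ℝ → ℝ} (hf : Measurable f)
    {C r t : ℝ} (hr : -1 < r) (ht : -1 < t)
    (hbound : ∀ s ∈ Ioo (0 : ℝ) 1, ‖f s‖ ≤ C * (s ^ r * (1 - s) ^ t)) :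
    IntervalIntegrable f volume 0 1 := by
  have hmajorant := ((intervalIntegrable_rpow_mul_one_sub_rpow hr ht).const_mul C)
  rw [intervalIntegrable_iff_integrableOn_Ioo_of_le zero_le_one] at hmajorant ⊢
  exact hmajorant.mono' hf.aestronglyMeasurable
    (ae_restrict_of_forall_mem measurableSet_Ioo hbound)

noncomputable def hIntegrand (a b s : ℝ) : ℝ :=
  (-(2 - a) * (1 - s ^ a) + (2 - b) * (1 - s ^ b)) / (s ^ a - s ^ b) ^ ((3 : ℝ) / 2)

noncomputable def jIntegrand (a b s : ℝ) : ℝ :=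
  s ^ (-a) * (s ^ a - s ^ b) ^ (-(1 / 2) : ℝ)

noncomputable def hPrimitive (a b x : ℝ) : ℝ :=
  2 * (x - x ^ (1 - a)) * (x ^ a - x ^ b) ^ (-(1 / 2) : ℝ)

section Bounds

variable {a b s : ℝ}

theorem rpow_sub_rpow_pos (hab : a < b) (hs : s ∈ Ioo (0 : ℝ) 1) : 0 < s ^ a - s ^ b :=
  sub_pos.mpr (Real.rpow_lt_rpow_of_exponent_gt hs.1 hs.2 hab)

theorem rpow_sub_rpow_rpow_neg_le {p : ℝ} (hp : 0 ≤ p) (hab : a < b)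
    (hs : s ∈ Ioo (0 : ℝ) 1) :
    (s ^ a - s ^ b) ^ (-p) ≤ min (b - a) 1 ^ (-p) * s ^ (a * -p) * (1 - s) ^ (-p) := by
  have hc : 0 < min (b - a) 1 := lt_min (sub_pos.mpr hab) one_pos
  have hsa : 0 < s ^ a := Real.rpow_pos_of_pos hs.1 a
  have h1s : 0 < 1 - s := sub_pos.mpr hs.2
  calc (s ^ a - s ^ b) ^ (-p) ≤ (min (b - a) 1 * s ^ a * (1 - s)) ^ (-p) :=
        Real.rpow_le_rpow_of_nonpos (by positivity)
          (min_mul_rpow_mul_one_sub_le_rpow_sub_rpow hab.le hs.1 hs.2.le) (neg_nonpos.mpr hp)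
    _ = min (b - a) 1 ^ (-p) * s ^ (a * -p) * (1 - s) ^ (-p) := by
        rw [Real.mul_rpow (by positivity) h1s.le, Real.mul_rpow hc.le hsa.le,
          Real.rpow_mul hs.1.le]

theorem norm_hIntegrand_le (ha : 0 ≤ a) (hab : a < b) (hs : s ∈ Ioo (0 : ℝ) 1) :
    ‖hIntegrand a b s‖
      ≤ (|2 - a| * max a 1 + |2 - b| * max b 1) * min (b - a) 1 ^ (-(3 / 2) : ℝ)
        * (s ^ (a * -(3 / 2)) * (1 - s) ^ (-(1 / 2) : ℝ)) := by
  have h1s : 0 < 1 - s := sub_pos.mpr hs.2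
  have hD := rpow_sub_rpow_pos hab hs
  have hnum : |-(2 - a) * (1 - s ^ a) + (2 - b) * (1 - s ^ b)|
      ≤ (|2 - a| * max a 1 + |2 - b| * max b 1) * (1 - s) := by
    have hA := one_sub_rpow_le_max_mul_one_sub hs.1.le hs.2.le ha
    have hB := one_sub_rpow_le_max_mul_one_sub hs.1.le hs.2.le (ha.trans hab.le)
    have hA0 : 0 ≤ 1 - s ^ a := sub_nonneg.mpr (Real.rpow_le_one hs.1.le hs.2.le ha)
    have hB0 : 0 ≤ 1 - s ^ b :=
      sub_nonneg.mpr (Real.rpow_le_one hs.1.le hs.2.le (ha.trans hab.le))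
    calc _ ≤ |2 - a| * (1 - s ^ a) + |2 - b| * (1 - s ^ b) := by
          refine (abs_add_le _ _).trans (le_of_eq ?_)
          rw [abs_mul, abs_mul, abs_neg, abs_of_nonneg hA0, abs_of_nonneg hB0]
      _ ≤ _ := by
          nlinarith [mul_le_mul_of_nonneg_left hA (abs_nonneg (2 - a)),
            mul_le_mul_of_nonneg_left hB (abs_nonneg (2 - b))]
  have hden := rpow_sub_rpow_rpow_neg_le (by norm_num : (0 : ℝ) ≤ 3 / 2) hab hs
  have hhalf : (1 - s) * (1 - s) ^ (-(3 / 2) : ℝ) = (1 - s) ^ (-(1 / 2) : ℝ) := by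
    rw [← Real.rpow_one_add' h1s.le (by norm_num)]; norm_num
  rw [hIntegrand, div_eq_mul_inv, ← Real.rpow_neg hD.le, norm_mul, Real.norm_eq_abs,
    Real.norm_of_nonneg (Real.rpow_nonneg hD.le _), ← hhalf]
  calc _ ≤ (|2 - a| * max a 1 + |2 - b| * max b 1) * (1 - s)
        * (min (b - a) 1 ^ (-(3 / 2) : ℝ) * s ^ (a * -(3 / 2)) * (1 - s) ^ (-(3 / 2) : ℝ)) :=
        mul_le_mul hnum (by simpa using hden) (Real.rpow_nonneg hD.le _) (by positivity)
    _ = _ := by ring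

theorem norm_jIntegrand_le (hab : a < b) (hs : s ∈ Ioo (0 : ℝ) 1) :
    ‖jIntegrand a b s‖ ≤ min (b - a) 1 ^ (-(1 / 2) : ℝ)
      * (s ^ (a * -(3 / 2)) * (1 - s) ^ (-(1 / 2) : ℝ)) := by
  have hD := rpow_sub_rpow_pos hab hs
  have hden := rpow_sub_rpow_rpow_neg_le (by norm_num : (0 : ℝ) ≤ 1 / 2) hab hs
  have hsa : 0 < s ^ (-a) := Real.rpow_pos_of_pos hs.1 _
  rw [jIntegrand, Real.norm_of_nonneg (by positivity)]
  calc _ ≤ s ^ (-a) * (min (b - a) 1 ^ (-(1 / 2) : ℝ) * s ^ (a * -(1 / 2))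
        * (1 - s) ^ (-(1 / 2) : ℝ)) := mul_le_mul_of_nonneg_left hden hsa.le
    _ = _ := by
        rw [show a * -(3 / 2) = -a + a * -(1 / 2) by ring, Real.rpow_add hs.1]; ring

theorem norm_hPrimitive_le (ha : 0 ≤ a) (hab : a < b) (hs : s ∈ Ioo (0 : ℝ) 1) :
    ‖hPrimitive a b s‖ ≤ 2 * max a 1 * min (b - a) 1 ^ (-(1 / 2) : ℝ)
      * (s ^ (1 - a * (3 / 2)) * (1 - s) ^ (1 / 2 : ℝ)) := by
  have h1s : 0 < 1 - s := sub_pos.mpr hs.2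
  have hD := rpow_sub_rpow_pos hab hs
  have hden := rpow_sub_rpow_rpow_neg_le (by norm_num : (0 : ℝ) ≤ 1 / 2) hab hs
  have hfactor : s - s ^ (1 - a) = -(s ^ (1 - a) * (1 - s ^ a)) := by
    rw [mul_sub, mul_one, ← Real.rpow_add hs.1, sub_add_cancel, Real.rpow_one]; ring
  have hnum : |s - s ^ (1 - a)| ≤ s ^ (1 - a) * (max a 1 * (1 - s)) := by
    rw [hfactor, abs_neg, abs_of_nonneg (mul_nonneg (Real.rpow_nonneg hs.1.le _)
      (sub_nonneg.mpr (Real.rpow_le_one hs.1.le hs.2.le ha)))]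
    exact mul_le_mul_of_nonneg_left (one_sub_rpow_le_max_mul_one_sub hs.1.le hs.2.le ha)
      (Real.rpow_nonneg hs.1.le _)
  have hhalf : (1 - s) * (1 - s) ^ (-(1 / 2) : ℝ) = (1 - s) ^ (1 / 2 : ℝ) := by
    rw [← Real.rpow_one_add' h1s.le (by norm_num)]; norm_num
  have hexp : s ^ (1 - a) * s ^ (a * -(1 / 2)) = s ^ (1 - a * (3 / 2)) := by
    rw [← Real.rpow_add hs.1]; ring_nf
  rw [hPrimitive, norm_mul, norm_mul, Real.norm_of_nonneg (Real.rpow_nonneg hD.le _),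
    Real.norm_eq_abs, Real.norm_eq_abs, abs_two, ← hhalf, ← hexp]
  calc _ ≤ 2 * (s ^ (1 - a) * (max a 1 * (1 - s)))
        * (min (b - a) 1 ^ (-(1 / 2) : ℝ) * s ^ (a * -(1 / 2)) * (1 - s) ^ (-(1 / 2) : ℝ)) := by
        gcongr
        exact mul_nonneg zero_le_two ((abs_nonneg _).trans hnum)
    _ = _ := by ring

end Bounds

section Integrals

variable {a b : ℝ}

theorem intervalIntegrable_hIntegrand (ha : 0 ≤ a) (hab : a < b) (ha' : a < 2 / 3) :
    IntervalIntegrable (hIntegrand a b) volume 0 1 :=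
  intervalIntegrable_of_norm_le_rpow_mul_one_sub_rpow (by unfold hIntegrand; fun_prop)
    (by linarith) (by norm_num) fun _ hs => norm_hIntegrand_le ha hab hs

theorem intervalIntegrable_jIntegrand (hab : a < b) (ha' : a < 2 / 3) :
    IntervalIntegrable (jIntegrand a b) volume 0 1 :=
  intervalIntegrable_of_norm_le_rpow_mul_one_sub_rpow (by unfold jIntegrand; fun_prop)
    (by linarith) (by norm_num) fun _ hs => norm_jIntegrand_le hab hs

theorem integral_jIntegrand_pos (hab : a < b) (ha' : a < 2 / 3) :
    0 < ∫ s in (0 : ℝ)..1, jIntegrand a b s :=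
  intervalIntegral.intervalIntegral_pos_of_pos_on (intervalIntegrable_jIntegrand hab ha')
    (fun _ hs => mul_pos (Real.rpow_pos_of_pos hs.1 _)
      (Real.rpow_pos_of_pos (rpow_sub_rpow_pos hab hs) _)) zero_lt_one

end Integrals

theorem tendsto_hPrimitive_zero_and_one {a b : ℝ} (ha : 0 ≤ a) (hab : a < b)
    (ha' : a < 2 / 3) :
    Tendsto (hPrimitive a b) (𝓝[>] 0) (𝓝 0) ∧ Tendsto (hPrimitive a b) (𝓝[<] 1) (𝓝 0) := by
  set g : ℝ → ℝ := fun s => 2 * max a 1 * min (b - a) 1 ^ (-(1 / 2) : ℝ)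
    * (s ^ (1 - a * (3 / 2)) * (1 - s) ^ (1 / 2 : ℝ))
  have hg : Continuous g :=
    continuous_const.mul ((Real.continuous_rpow_const (by linarith)).mul
      ((continuous_const.sub continuous_id).rpow_const fun _ => Or.inr (by norm_num)))
  have hg0 : g 0 = 0 := by simp [g, Real.zero_rpow (show 1 - a * (3 / 2) ≠ 0 by linarith)]
  have hg1 : g 1 = 0 := by simp [g]
  constructor
  · refine squeeze_zero_norm' (a := g) ?_ ((hg.tendsto' 0 0 hg0).mono_left nhdsWithin_le_nhds)
    filter_upwards [Ioo_mem_nhdsGT zero_lt_one] with s hs using norm_hPrimitive_le ha hab hs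
  · refine squeeze_zero_norm' (a := g) ?_ ((hg.tendsto' 1 0 hg1).mono_left nhdsWithin_le_nhds)
    filter_upwards [Ioo_mem_nhdsLT zero_lt_one] with s hs using norm_hPrimitive_le ha hab hs

theorem hasDerivAt_hPrimitive {a b s : ℝ} (hab : a < b) (hs : s ∈ Ioo (0 : ℝ) 1) :
    HasDerivAt (hPrimitive a b) (hIntegrand a b s - (2 - 2 * a - b) * jIntegrand a b s) s := by
  have hs0 := hs.1.ne'
  have hD := rpow_sub_rpow_pos hab hs
  have hu : HasDerivAt (fun x : ℝ => 2 * (x - x ^ (1 - a)))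
      (2 * (1 - (1 - a) * s ^ (1 - a - 1))) s :=
    ((hasDerivAt_id s).sub (Real.hasDerivAt_rpow_const (Or.inl hs0))).const_mul 2
  have hv : HasDerivAt (fun x : ℝ => (x ^ a - x ^ b) ^ (-(1 / 2) : ℝ))
      ((a * s ^ (a - 1) - b * s ^ (b - 1)) * -(1 / 2) * (s ^ a - s ^ b) ^ (-(1 / 2) - 1 : ℝ)) s :=
    ((Real.hasDerivAt_rpow_const (Or.inl hs0)).sub
      (Real.hasDerivAt_rpow_const (Or.inl hs0))).rpow_const (Or.inl hD.ne')
  refine (hu.mul hv).congr_deriv ?_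
  set S := (s ^ a - s ^ b) ^ (1 / 2 : ℝ)
  have hA : 0 < s ^ a := Real.rpow_pos_of_pos hs.1 _
  have e1 : (s ^ a - s ^ b) ^ (-(1 / 2) : ℝ) = S⁻¹ := Real.rpow_neg hD.le _
  have e2 : (s ^ a - s ^ b) ^ (-(1 / 2) - 1 : ℝ) = (S * (s ^ a - s ^ b))⁻¹ := by
    rw [show (-(1 / 2) - 1 : ℝ) = -(1 / 2 + 1) by ring, Real.rpow_neg hD.le,
      Real.rpow_add hD, Real.rpow_one]
  have e3 : (s ^ a - s ^ b) ^ ((3 : ℝ) / 2) = S * (s ^ a - s ^ b) := by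
    rw [show (3 : ℝ) / 2 = 1 / 2 + 1 by norm_num, Real.rpow_add hD, Real.rpow_one]
  have e4 : s ^ (1 - a) = s / s ^ a := by rw [Real.rpow_sub hs.1, Real.rpow_one]
  have e5 : s ^ (1 - a - 1) = (s ^ a)⁻¹ := by rw [sub_sub_cancel_left, Real.rpow_neg hs.1.le]
  have e6 : s ^ (a - 1) = s ^ a / s := by rw [Real.rpow_sub hs.1, Real.rpow_one]
  have e7 : s ^ (b - 1) = s ^ b / s := by rw [Real.rpow_sub hs.1, Real.rpow_one]
  have e8 : s ^ (-a) = (s ^ a)⁻¹ := Real.rpow_neg hs.1.le a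
  simp only [hIntegrand, jIntegrand, e1, e2, e3, e4, e5, e6, e7, e8]
  field_simp
  ring

theorem integral_hIntegrand_eq {a b : ℝ} (ha : 0 ≤ a) (hab : a < b) (ha' : a < 2 / 3) :
    ∫ s in Ioo (0 : ℝ) 1, hIntegrand a b s
      = (2 - 2 * a - b) * ∫ s in (0 : ℝ)..1, jIntegrand a b s := by
  have hh := intervalIntegrable_hIntegrand ha hab ha'
  have hj := (intervalIntegrable_jIntegrand hab ha').const_mul (2 - 2 * a - b)
  obtain ⟨h0, h1⟩ := tendsto_hPrimitive_zero_and_one ha hab ha'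
  have hftc := intervalIntegral.integral_eq_sub_of_hasDerivAt_of_tendsto zero_lt_one
    (fun s hs => hasDerivAt_hPrimitive hab hs) (hh.sub hj) h0 h1
  rw [intervalIntegral.integral_sub hh hj, intervalIntegral.integral_const_mul, sub_self,
    sub_eq_zero] at hftc
  rw [← hftc, intervalIntegral.integral_of_le zero_le_one, integral_Ioc_eq_integral_Ioo]

theorem stmt_11_general (p q : ℝ) (hp : 1 < p) (hpq : p < q) (hp' : p < 7/3)
    (α β : ℝ) (hα : α = (p-1)/2) (hβ : β = (q-1)/2)
    (H : ℝ) (hH : H = ∫ s in Set.Ioo (0:ℝ) 1,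
      (-(2-α)*(1 - s ^ α) + (2-β)*(1 - s ^ β)) / (s ^ α - s ^ β) ^ ((3:ℝ)/2)) :
    (2*p + q > 7 → H < 0) ∧ (2*p + q = 7 → H = 0) ∧ (2*p + q < 7 → H > 0) := by
  have ha : 0 ≤ α := by rw [hα]; linarith
  have hab : α < β := by rw [hα, hβ]; linarith
  have ha' : α < 2 / 3 := by rw [hα]; linarith
  have hH' : H = (7 - 2 * p - q) / 2 * ∫ s in (0 : ℝ)..1, jIntegrand α β s := by
    rw [hH, ← show 2 - 2 * α - β = (7 - 2 * p - q) / 2 by rw [hα, hβ]; ring]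
    exact integral_hIntegrand_eq ha hab ha'
  have hJ := integral_jIntegrand_pos hab ha'
  refine ⟨fun h => ?_, fun h => ?_, fun h => ?_⟩ <;> rw [hH']
  · exact mul_neg_of_neg_of_pos (by linarith) hJ
  · rw [show 7 - 2 * p - q = 0 by linarith, zero_div, zero_mul]
  · exact mul_pos (by linarith) hJ

theorem stmt_11 (p q : ℝ) (hp : 1 < p) (hpq : p < q) (hq : q < 5) (hp' : p < 7/3)
    (α β : ℝ) (hα : α = (p-1)/2) (hβ : β = (q-1)/2)
    (H : ℝ) (hH : H = ∫ s in Set.Ioo (0:ℝ) 1,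
      (-(2-α)*(1 - s ^ α) + (2-β)*(1 - s ^ β)) / (s ^ α - s ^ β) ^ ((3:ℝ)/2)) :
    (2*p + q > 7 → H < 0) ∧ (2*p + q = 7 → H = 0) ∧ (2*p + q < 7 → H > 0) :=
  stmt_11_general p q hp hpq hp' α β hα hβ H hH
end

section
/- Let h_0 < s_0 be real numbers and let f : (h_0, ∞) → ℝ be continuously differentiable. Assume: (i) f(h) > 0 for all h ≥ s_0; (ii) f' has at most one zero in (h_0, s_0), and if z_0 is such a zero then f' > 0 on (h_0, z_0) and f' < 0 on (z_0, s_0); (iii) f < 0 on (h_0, h_0 + ε) for some ε > 0. Then there exists a unique z_* ∈ (h_0, s_0) such that f < 0 on (h_0, z_*), f(z_*) = 0, f'(z_*) > 0, and f > 0 on (z_*, ∞). -/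
/-!
On any interval where `f' > 0`, `f` is strictly increasing. If `f'` vanishes at `z₀ ∈ (h₀, s₀)`,
then `f` increases on `(h₀, z₀]` and decreases on `[z₀, s₀]`, so `f > f s₀ > 0` on `[z₀, s₀)`.
Otherwise, by Darboux's theorem `f'` has constant sign on `(h₀, s₀)`, and it cannot be negative
since `f` is negative somewhere near `h₀` but positive at `s₀`; so `f` increases on `(h₀, s₀]`.
In both cases `f` is strictly increasing from negative to positive values on some `(h₀, z₁]`
with `f > 0` on `[z₁, ∞)` and `f' > 0` on `(h₀, z₁)`, and its zero there is the unique `z_*`.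
-/

open Set

section

variable {f f' : ℝ → ℝ} {h₀ : ℝ}

lemma strictMonoOn_of_hasDerivAt_pos {D : Set ℝ} (hD : Convex ℝ D)
    (hderiv : ∀ x ∈ D, HasDerivAt f (f' x) x) (hf' : ∀ x ∈ interior D, 0 < f' x) :
    StrictMonoOn f D :=
  strictMonoOn_of_hasDerivWithinAt_pos hD (HasDerivAt.continuousOn hderiv)
    (fun x hx => (hderiv x (interior_subset hx)).hasDerivWithinAt) hf'

lemma strictAntiOn_of_hasDerivAt_neg {D : Set ℝ} (hD : Convex ℝ D)
    (hderiv : ∀ x ∈ D, HasDerivAt f (f' x) x) (hf' : ∀ x ∈ interior D, f' x < 0) :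
    StrictAntiOn f D :=
  strictAntiOn_of_hasDerivWithinAt_neg hD (HasDerivAt.continuousOn hderiv)
    (fun x hx => (hderiv x (interior_subset hx)).hasDerivWithinAt) hf'

lemma exists_mem_Ioo_neg_of_neg_near {b : ℝ} (hneg : ∃ ε > 0, ∀ x ∈ Ioo h₀ (h₀ + ε), f x < 0)
    (hb : h₀ < b) : ∃ a ∈ Ioo h₀ b, f a < 0 := by
  obtain ⟨ε, hε, hneg⟩ := hneg
  obtain ⟨a, ha, hab⟩ := exists_between (lt_min (lt_add_of_pos_right h₀ hε) hb)
  exact ⟨a, ⟨ha, hab.trans_le (min_le_right _ _)⟩, hneg a ⟨ha, hab.trans_le (min_le_left _ _)⟩⟩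

lemma exists_deriv_pos_Ioo_and_pos_Ici {s₀ a : ℝ}
    (hderiv : ∀ x ∈ Ioi h₀, HasDerivAt f (f' x) x) (hpos : ∀ x, s₀ ≤ x → 0 < f x)
    (hshape : ∀ z₀ ∈ Ioo h₀ s₀, f' z₀ = 0 →
      (∀ x ∈ Ioo h₀ z₀, 0 < f' x) ∧ (∀ x ∈ Ioo z₀ s₀, f' x < 0))
    (ha : a ∈ Ioo h₀ s₀) (hfa : f a ≤ 0) :
    ∃ z₁ ∈ Ioc h₀ s₀, (∀ x ∈ Ioo h₀ z₁, 0 < f' x) ∧ ∀ x, z₁ ≤ x → 0 < f x := by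
  by_cases hzero : ∃ z₀ ∈ Ioo h₀ s₀, f' z₀ = 0
  · obtain ⟨z₀, hz₀, hf'z₀⟩ := hzero
    obtain ⟨hinc, hdec⟩ := hshape z₀ hz₀ hf'z₀
    refine ⟨z₀, ⟨hz₀.1, hz₀.2.le⟩, hinc, fun x hx => ?_⟩
    rcases lt_or_ge x s₀ with hxs | hxs
    · have hanti : StrictAntiOn f (Icc z₀ s₀) :=
        strictAntiOn_of_hasDerivAt_neg (convex_Icc z₀ s₀)
          (fun y hy => hderiv y (hz₀.1.trans_le hy.1)) (by rwa [interior_Icc])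
      exact (hpos s₀ le_rfl).trans (hanti ⟨hx, hxs.le⟩ ⟨hx.trans hxs.le, le_rfl⟩ hxs)
    · exact hpos x hxs
  · push Not at hzero
    refine ⟨s₀, ⟨ha.1.trans ha.2, le_rfl⟩, ?_, hpos⟩
    rcases hasDerivWithinAt_forall_lt_or_forall_gt_of_forall_ne (convex_Ioo h₀ s₀)
      (fun x hx => (hderiv x hx.1).hasDerivWithinAt) hzero with hdec | hinc
    · have hanti : StrictAntiOn f (Ioc h₀ s₀) :=
        strictAntiOn_of_hasDerivAt_neg (convex_Ioc h₀ s₀) (fun y hy => hderiv y hy.1)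
          (by rwa [interior_Ioc])
      have := hanti ⟨ha.1, ha.2.le⟩ ⟨ha.1.trans ha.2, le_rfl⟩ ha.2
      linarith [hpos s₀ le_rfl]
    · exact hinc

lemma neg_Ioo_and_pos_Ioi_of_strictMonoOn {b z : ℝ} (hmono : StrictMonoOn f (Ioc h₀ b))
    (hb : ∀ x, b ≤ x → 0 < f x) (hz : z ∈ Ioc h₀ b) (hfz : f z = 0) :
    (∀ x ∈ Ioo h₀ z, f x < 0) ∧ ∀ x, z < x → 0 < f x := by
  refine ⟨fun x hx => hfz ▸ hmono ⟨hx.1, hx.2.le.trans hz.2⟩ hz hx.2, fun x hzx => ?_⟩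
  rcases lt_or_ge x b with hxb | hxb
  · exact hfz ▸ hmono hz ⟨hz.1.trans hzx, hxb.le⟩ hzx
  · exact hb x hxb

lemma eq_of_neg_Ioo_of_pos_Ioi {z y : ℝ} (hneg : ∀ x ∈ Ioo h₀ z, f x < 0)
    (hpos : ∀ x, z < x → 0 < f x) (hy : h₀ < y) (hfy : f y = 0) : y = z := by
  rcases lt_trichotomy y z with hyz | hyz | hyz
  · exact absurd hfy (hneg y ⟨hy, hyz⟩).ne
  · exact hyz
  · exact absurd hfy (hpos y hyz).ne'

end

theorem stmt_17_general (h₀ s₀ : ℝ) (hs₀ : h₀ < s₀) (f f' : ℝ → ℝ)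
    (hderiv : ∀ x ∈ Set.Ioi h₀, HasDerivAt f (f' x) x)
    (hpos : ∀ h : ℝ, s₀ ≤ h → 0 < f h)
    (hshape : ∀ z₀ ∈ Set.Ioo h₀ s₀, f' z₀ = 0 →
      (∀ h ∈ Set.Ioo h₀ z₀, 0 < f' h) ∧ (∀ h ∈ Set.Ioo z₀ s₀, f' h < 0))
    (hneg : ∃ ε > 0, ∀ h ∈ Set.Ioo h₀ (h₀ + ε), f h < 0) :
    ∃! z : ℝ, z ∈ Set.Ioo h₀ s₀ ∧
      (∀ h ∈ Set.Ioo h₀ z, f h < 0) ∧ f z = 0 ∧ 0 < f' z ∧ (∀ h : ℝ, z < h → 0 < f h) := by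
  obtain ⟨a, ha, hfa⟩ := exists_mem_Ioo_neg_of_neg_near hneg hs₀
  obtain ⟨z₁, hz₁, hf'pos, hfpos⟩ :=
    exists_deriv_pos_Ioo_and_pos_Ici hderiv hpos hshape ha hfa.le
  have hmono : StrictMonoOn f (Ioc h₀ z₁) :=
    strictMonoOn_of_hasDerivAt_pos (convex_Ioc h₀ z₁) (fun y hy => hderiv y hy.1)
      (by rwa [interior_Ioc])
  obtain ⟨b, hb, hfb⟩ := exists_mem_Ioo_neg_of_neg_near hneg hz₁.1
  obtain ⟨z, hz, hfz⟩ := intermediate_value_Ioo hb.2.le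
    (HasDerivAt.continuousOn fun y hy => hderiv y (hb.1.trans_le hy.1))
    ⟨hfb, hfpos z₁ le_rfl⟩
  have hzIoo : z ∈ Ioo h₀ z₁ := ⟨hb.1.trans hz.1, hz.2⟩
  obtain ⟨hleft, hright⟩ :=
    neg_Ioo_and_pos_Ioi_of_strictMonoOn hmono hfpos ⟨hzIoo.1, hzIoo.2.le⟩ hfz
  refine ⟨z, ⟨⟨hzIoo.1, hzIoo.2.trans_le hz₁.2⟩, hleft, hfz, hf'pos z hzIoo, hright⟩, ?_⟩
  rintro y ⟨hy, -, hfy, -, -⟩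
  exact eq_of_neg_Ioo_of_pos_Ioi hleft hright hy.1 hfy

theorem stmt_17 (h₀ s₀ : ℝ) (hs₀ : h₀ < s₀) (f f' : ℝ → ℝ)
    (hderiv : ∀ x ∈ Set.Ioi h₀, HasDerivAt f (f' x) x)
    (hcont : ContinuousOn f' (Set.Ioi h₀))
    (hpos : ∀ h : ℝ, s₀ ≤ h → 0 < f h)
    (huniq : ∀ z₁ ∈ Set.Ioo h₀ s₀, ∀ z₂ ∈ Set.Ioo h₀ s₀, f' z₁ = 0 → f' z₂ = 0 → z₁ = z₂)
    (hshape : ∀ z₀ ∈ Set.Ioo h₀ s₀, f' z₀ = 0 →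
      (∀ h ∈ Set.Ioo h₀ z₀, 0 < f' h) ∧ (∀ h ∈ Set.Ioo z₀ s₀, f' h < 0))
    (hneg : ∃ ε > 0, ∀ h ∈ Set.Ioo h₀ (h₀ + ε), f h < 0) :
    ∃! z : ℝ, z ∈ Set.Ioo h₀ s₀ ∧
      (∀ h ∈ Set.Ioo h₀ z, f h < 0) ∧ f z = 0 ∧ 0 < f' z ∧ (∀ h : ℝ, z < h → 0 < f h) :=
  stmt_17_general h₀ s₀ hs₀ f f' hderiv hpos hshape hneg
end
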